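/- arXiv:1401.1131 — 4 statements merged into one kernel-verified Lean document; each statement's English description precedes it below -/
import Mathlib

section
/- Let X, X_1, ..., X_p be smooth vector fields on an open set U such that [X, X_k] = 0 for all k, the vectors X_1(x), ..., X_p(x) are linearly independent at every x ∈ U, and there exist smooth functions F_{ij}^k with [X_i, X_j] = Σ_k F_{ij}^k · X_k for all i, j. Then every F_{ij}^k is a first integral of X, i.e., L_X F_{ij}^k = 0 on U. -/
open VectorField

/-- Main theorem, part 1: if `X₁, …, X_p` are pointwise linearly independent
infinitesimal symmetries of `X` on an open set `U`, and `[Xᵢ, Xⱼ] = Σₖ Fᵢⱼᵏ Xₖ`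
for smooth functions `Fᵢⱼᵏ`, then each `Fᵢⱼᵏ` is a first integral of `X`. -/
theorem structure_functions_are_first_integrals
    {E : Type*} [NormedAddCommGroup E] [NormedSpace ℝ E]
    {U : Set E} (hU : IsOpen U) {p : ℕ} (hp : 0 < p)
    (X : E → E) (Xs : Fin p → E → E) (F : Fin p → Fin p → Fin p → E → ℝ)
    (hX : ContDiffOn ℝ (⊤ : ℕ∞) X U) (hXs : ∀ k, ContDiffOn ℝ (⊤ : ℕ∞) (Xs k) U)
    (hF : ∀ i j k, ContDiffOn ℝ (⊤ : ℕ∞) (F i j k) U)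
    (hsym : ∀ k, ∀ x ∈ U, lieBracket ℝ X (Xs k) x = 0)
    (hindep : ∀ x ∈ U, LinearIndependent ℝ (fun k => Xs k x))
    (hbr : ∀ i j, ∀ x ∈ U,
      lieBracket ℝ (Xs i) (Xs j) x = ∑ k, F i j k x • Xs k x) :
    ∀ i j k, ∀ x ∈ U, fderiv ℝ (F i j k) x (X x) = 0 := by
  intro i j k x hx
  have hxnhds : U ∈ nhds x := hU.mem_nhds hx
  -- smoothness at x
  have hXat : ContDiffAt ℝ 2 X x := (hX.contDiffAt hxnhds).of_le (WithTop.coe_le_coe.mpr le_top)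
  have hXsat : ∀ l, ContDiffAt ℝ 2 (Xs l) x :=
    fun l => ((hXs l).contDiffAt hxnhds).of_le (WithTop.coe_le_coe.mpr le_top)
  have hFat : ∀ l, ContDiffAt ℝ 1 (F i j l) x :=
    fun l => ((hF i j l).contDiffAt hxnhds).of_le (by simp)
  have hXd : DifferentiableAt ℝ X x := hXat.differentiableAt two_ne_zero
  have hXsd : ∀ l, DifferentiableAt ℝ (Xs l) x :=
    fun l => (hXsat l).differentiableAt two_ne_zero
  have hFd : ∀ l, DifferentiableAt ℝ (F i j l) x :=
    fun l => (hFat l).differentiableAt one_ne_zero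
  set G : E → E := fun y => ∑ l, F i j l y • Xs l y with hG
  -- Jacobi identity gives [X, [Xi, Xj]] x = 0
  have jac := leibniz_identity_lieBracket (𝕜 := ℝ) (by simp) hXat (hXsat i) (hXsat j)
  have h1 : lieBracket ℝ (lieBracket ℝ X (Xs i)) (Xs j) x = 0 := by
    have hev : lieBracket ℝ X (Xs i) =ᶠ[nhds x] (fun _ => (0 : E)) :=
      Filter.eventuallyEq_of_mem hxnhds (fun y hy => hsym i y hy)
    rw [hev.lieBracket_vectorField_eq Filter.EventuallyEq.rfl]
    simp [lieBracket]
  have h2 : lieBracket ℝ (Xs i) (lieBracket ℝ X (Xs j)) x = 0 := by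
    have hev : lieBracket ℝ X (Xs j) =ᶠ[nhds x] (fun _ => (0 : E)) :=
      Filter.eventuallyEq_of_mem hxnhds (fun y hy => hsym j y hy)
    rw [Filter.EventuallyEq.lieBracket_vectorField_eq Filter.EventuallyEq.rfl hev]
    simp [lieBracket]
  have hzero : lieBracket ℝ X G x = 0 := by
    have hev : lieBracket ℝ (Xs i) (Xs j) =ᶠ[nhds x] G :=
      Filter.eventuallyEq_of_mem hxnhds (fun y hy => hbr i j y hy)
    rw [← Filter.EventuallyEq.lieBracket_vectorField_eq Filter.EventuallyEq.rfl hev]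
    rw [jac, h1, h2, add_zero]
  -- compute the bracket [X, G]
  have hGder : fderiv ℝ G x =
      ∑ l, (F i j l x • fderiv ℝ (Xs l) x + (fderiv ℝ (F i j l) x).smulRight (Xs l x)) := by
    rw [hG]
    rw [fderiv_fun_sum (A := fun l y => F i j l y • Xs l y) (fun l _ => ((hFd l).smul (hXsd l)))]
    exact Finset.sum_congr rfl fun l _ => fderiv_smul (hFd l) (hXsd l)
  have hkey : (∑ l, (fderiv ℝ (F i j l) x (X x)) • Xs l x) = 0 := by
    have := hzero
    rw [lieBracket] at this
    rw [hGder] at this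
    simp only [ContinuousLinearMap.coe_sum', Finset.sum_apply,
      ContinuousLinearMap.add_apply, ContinuousLinearMap.coe_smul',
      Pi.smul_apply, ContinuousLinearMap.smulRight_apply, hG] at this
    have hbrk : ∀ l, fderiv ℝ (Xs l) x (X x) = fderiv ℝ X x (Xs l x) := by
      intro l
      have := hsym l x hx
      rw [lieBracket] at this
      exact sub_eq_zero.mp this
    rw [show (fderiv ℝ X x) (∑ l, F i j l x • Xs l x)
        = ∑ l, F i j l x • fderiv ℝ X x (Xs l x) by
      rw [map_sum]; exact Finset.sum_congr rfl fun l _ => (fderiv ℝ X x).map_smul _ _] at this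
    calc (∑ l, (fderiv ℝ (F i j l) x (X x)) • Xs l x)
        = ∑ l, (F i j l x • (fderiv ℝ (Xs l) x) (X x)
            + (fderiv ℝ (F i j l) x) (X x) • Xs l x)
          - ∑ l, F i j l x • (fderiv ℝ X x) (Xs l x) := by
          rw [Finset.sum_add_distrib]
          have : ∀ l ∈ Finset.univ, F i j l x • (fderiv ℝ (Xs l) x) (X x)
              = F i j l x • (fderiv ℝ X x) (Xs l x) :=
            fun l _ => by rw [hbrk l]
          rw [Finset.sum_congr rfl this]
          abel
      _ = 0 := this
  exact Fintype.linearIndependent_iff.mp (hindep x hx)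
    (fun l => fderiv ℝ (F i j l) x (X x)) hkey k
end

section
/- Under the hypotheses of the main theorem (X_1,...,X_p pointwise linearly independent infinitesimal symmetries of X with [X_i, X_j] = Σ_k F_{ij}^k X_k), for all indices i, j, k, l, the function L_{X_l} F_{ij}^k is also a first integral of X, i.e., L_X (L_{X_l} F_{ij}^k) = 0. -/
open VectorField Filter Topology

/-- Part 1: the structure functions are first integrals of `X`. -/
theorem structure_functions_are_first_integrals_aux
    {E : Type*} [NormedAddCommGroup E] [NormedSpace ℝ E]
    {U : Set E} (hU : IsOpen U) {p : ℕ}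
    (X : E → E) (Xs : Fin p → E → E) (F : Fin p → Fin p → Fin p → E → ℝ)
    (hX : ContDiffOn ℝ (⊤ : ℕ∞) X U) (hXs : ∀ k, ContDiffOn ℝ (⊤ : ℕ∞) (Xs k) U)
    (hF : ∀ i j k, ContDiffOn ℝ (⊤ : ℕ∞) (F i j k) U)
    (hsym : ∀ k, ∀ x ∈ U, lieBracket ℝ X (Xs k) x = 0)
    (hindep : ∀ x ∈ U, LinearIndependent ℝ (fun k => Xs k x))
    (hbr : ∀ i j, ∀ x ∈ U,
      lieBracket ℝ (Xs i) (Xs j) x = ∑ k, F i j k x • Xs k x) :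
    ∀ i j k, ∀ x ∈ U, fderiv ℝ (F i j k) x (X x) = 0 := by
  intro i j k x hx
  have hUx : U ∈ 𝓝 x := hU.mem_nhds hx
  have hXat : ContDiffAt ℝ 2 X x := (hX.contDiffAt hUx).of_le (WithTop.coe_le_coe.2 le_top)
  have hXsat : ∀ m, ContDiffAt ℝ 2 (Xs m) x := fun m => ((hXs m).contDiffAt hUx).of_le (WithTop.coe_le_coe.2 le_top)
  have hFat : ∀ m, ContDiffAt ℝ 2 (F i j m) x := fun m => ((hF i j m).contDiffAt hUx).of_le (WithTop.coe_le_coe.2 le_top)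
  have hXd : DifferentiableAt ℝ X x := hXat.differentiableAt two_ne_zero
  have hXsd : ∀ m, DifferentiableAt ℝ (Xs m) x := fun m => (hXsat m).differentiableAt two_ne_zero
  have hFd : ∀ m, DifferentiableAt ℝ (F i j m) x := fun m => (hFat m).differentiableAt two_ne_zero
  -- [X, Xs m] vanishes in a neighborhood of x
  have hbr0 : ∀ m, lieBracket ℝ X (Xs m) =ᶠ[𝓝 x] (fun _ => (0 : E)) := by
    intro m
    filter_upwards [hUx] with y hy using hsym m y hy
  -- Jacobi identity at x
  have jac := leibniz_identity_lieBracket (𝕜 := ℝ) (by simp) hXat (hXsat i) (hXsat j)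
  -- the two right-hand terms vanish
  have h1 : lieBracket ℝ (lieBracket ℝ X (Xs i)) (Xs j) x = 0 := by
    have e1 : lieBracket ℝ X (Xs i) x = 0 := hsym i x hx
    have e2 : fderiv ℝ (lieBracket ℝ X (Xs i)) x = 0 := by
      rw [(hbr0 i).fderiv_eq]; exact fderiv_const_apply 0
    show fderiv ℝ (Xs j) x (lieBracket ℝ X (Xs i) x)
      - fderiv ℝ (lieBracket ℝ X (Xs i)) x (Xs j x) = 0
    rw [e1, e2]; simp
  have h2 : lieBracket ℝ (Xs i) (lieBracket ℝ X (Xs j)) x = 0 := by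
    have e1 : lieBracket ℝ X (Xs j) x = 0 := hsym j x hx
    have e2 : fderiv ℝ (lieBracket ℝ X (Xs j)) x = 0 := by
      rw [(hbr0 j).fderiv_eq]; exact fderiv_const_apply 0
    show fderiv ℝ (lieBracket ℝ X (Xs j)) x (Xs i x)
      - fderiv ℝ (Xs i) x (lieBracket ℝ X (Xs j) x) = 0
    rw [e1, e2]; simp
  have jac0 : lieBracket ℝ X (lieBracket ℝ (Xs i) (Xs j)) x = 0 := by
    rw [jac, h1, h2, add_zero]
  -- replace [Xs i, Xs j] by the sum ∑ F • Xs
  set G : E → E := fun q => ∑ m, F i j m q • Xs m q with hG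
  have hGeq : lieBracket ℝ (Xs i) (Xs j) =ᶠ[𝓝 x] G := by
    filter_upwards [hUx] with y hy using hbr i j y hy
  have hXG : lieBracket ℝ X G x = 0 := by
    exact ((Filter.EventuallyEq.lieBracket_vectorField
      (Filter.EventuallyEq.rfl (f := X)) hGeq.symm).self_of_nhds).trans jac0
  -- compute [X, G] x explicitly
  have hAd : ∀ m : Fin p, DifferentiableAt ℝ (fun q => F i j m q • Xs m q) x :=
    fun m => (hFd m).smul (hXsd m)
  have hfdG : fderiv ℝ G x = ∑ m, (F i j m x • fderiv ℝ (Xs m) x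
      + (fderiv ℝ (F i j m) x).smulRight (Xs m x)) := by
    rw [hG, fderiv_fun_sum (fun m _ => hAd m)]
    exact Finset.sum_congr rfl fun m _ => fderiv_smul (hFd m) (hXsd m)
  have hcalc : lieBracket ℝ X G x
      = ∑ m, (fderiv ℝ (F i j m) x (X x)) • Xs m x := by
    simp only [lieBracket_eq]
    rw [hfdG]
    have hGx : G x = ∑ m, F i j m x • Xs m x := rfl
    rw [hGx, map_sum]
    rw [ContinuousLinearMap.sum_apply]
    rw [← Finset.sum_sub_distrib]
    refine Finset.sum_congr rfl fun m _ => ?_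
    have hb : fderiv ℝ (Xs m) x (X x) - fderiv ℝ X x (Xs m x) = 0 := hsym m x hx
    simp only [ContinuousLinearMap.add_apply, ContinuousLinearMap.smul_apply,
      ContinuousLinearMap.smulRight_apply, map_smul]
    have : F i j m x • fderiv ℝ (Xs m) x (X x) - F i j m x • fderiv ℝ X x (Xs m x)
        = F i j m x • (fderiv ℝ (Xs m) x (X x) - fderiv ℝ X x (Xs m x)) := by
      rw [smul_sub]
    rw [add_sub_right_comm, this, hb, smul_zero, zero_add]
  have hzero : ∑ m, (fderiv ℝ (F i j m) x (X x)) • Xs m x = 0 := by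
    rw [← hcalc, hXG]
  exact Fintype.linearIndependent_iff.1 (hindep x hx)
    (fun m => fderiv ℝ (F i j m) x (X x)) hzero k

/-- Main theorem, part 2: under the same hypotheses, for all indices `i, j, k, l`
the function `L_{X_l} Fᵢⱼᵏ` is also a first integral of `X`. -/
theorem lieDeriv_structure_functions_are_first_integrals
    {E : Type*} [NormedAddCommGroup E] [NormedSpace ℝ E]
    {U : Set E} (hU : IsOpen U) {p : ℕ} (hp : 0 < p)
    (X : E → E) (Xs : Fin p → E → E) (F : Fin p → Fin p → Fin p → E → ℝ)
    (hX : ContDiffOn ℝ (⊤ : ℕ∞) X U) (hXs : ∀ k, ContDiffOn ℝ (⊤ : ℕ∞) (Xs k) U)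
    (hF : ∀ i j k, ContDiffOn ℝ (⊤ : ℕ∞) (F i j k) U)
    (hsym : ∀ k, ∀ x ∈ U, lieBracket ℝ X (Xs k) x = 0)
    (hindep : ∀ x ∈ U, LinearIndependent ℝ (fun k => Xs k x))
    (hbr : ∀ i j, ∀ x ∈ U,
      lieBracket ℝ (Xs i) (Xs j) x = ∑ k, F i j k x • Xs k x) :
    ∀ i j k l, ∀ x ∈ U,
      fderiv ℝ (fun q => fderiv ℝ (F i j k) q (Xs l q)) x (X x) = 0 := by
  have key := structure_functions_are_first_integrals_aux hU X Xs F hX hXs hF hsym hindep hbr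
  intro i j k l x hx
  have hUx : U ∈ 𝓝 x := hU.mem_nhds hx
  set f : E → ℝ := F i j k with hf
  have hfat : ContDiffAt ℝ 2 f x := ((hF i j k).contDiffAt hUx).of_le (WithTop.coe_le_coe.2 le_top)
  have hfd : DifferentiableAt ℝ f x := hfat.differentiableAt two_ne_zero
  have hXat : ContDiffAt ℝ 2 X x := (hX.contDiffAt hUx).of_le (WithTop.coe_le_coe.2 le_top)
  have hXd : DifferentiableAt ℝ X x := hXat.differentiableAt two_ne_zero
  have hYd : DifferentiableAt ℝ (Xs l) x :=
    (((hXs l).contDiffAt hUx).of_le (WithTop.coe_le_coe.2 le_top)).differentiableAt two_ne_zero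
  have hdfd : DifferentiableAt ℝ (fderiv ℝ f) x :=
    (hfat.fderiv_right (m := 1) le_rfl).differentiableAt one_ne_zero
  -- symmetry of second derivative
  have hsymm : IsSymmSndFDerivAt ℝ f x := hfat.isSymmSndFDerivAt (by simp)
  -- the function q ↦ (fderiv f q) (X q) vanishes on U
  have h0 : (fun q => fderiv ℝ f q (X q)) =ᶠ[𝓝 x] (fun _ => (0 : ℝ)) := by
    filter_upwards [hUx] with y hy using key i j k y hy
  have hD0 : fderiv ℝ (fun q => fderiv ℝ f q (X q)) x = 0 := by
    rw [h0.fderiv_eq]; exact fderiv_const_apply 0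
  have hexp : ∀ (Y : E → E), DifferentiableAt ℝ Y x →
      fderiv ℝ (fun q => fderiv ℝ f q (Y q)) x
      = (fderiv ℝ f x).comp (fderiv ℝ Y x) + (fderiv ℝ (fderiv ℝ f) x).flip (Y x) :=
    fun Y hY => fderiv_clm_apply hdfd hY
  have hXe := hexp X hXd
  have hYe := hexp (Xs l) hYd
  have hX0 : fderiv ℝ f x (fderiv ℝ X x (Xs l x))
      + fderiv ℝ (fderiv ℝ f) x (Xs l x) (X x) = 0 := by
    have := congrArg (fun (L : E →L[ℝ] ℝ) => L (Xs l x)) (hD0.symm.trans hXe)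
    simpa using this.symm
  rw [hYe]
  simp only [ContinuousLinearMap.add_apply, ContinuousLinearMap.coe_comp',
    Function.comp_apply, ContinuousLinearMap.flip_apply]
  have hswap : fderiv ℝ (fderiv ℝ f) x (X x) (Xs l x)
      = fderiv ℝ (fderiv ℝ f) x (Xs l x) (X x) := hsymm.eq _ _
  rw [hswap]
  have hb : fderiv ℝ (Xs l) x (X x) - fderiv ℝ X x (Xs l x) = 0 := hsym l x hx
  have : fderiv ℝ f x (fderiv ℝ (Xs l) x (X x)) - fderiv ℝ f x (fderiv ℝ X x (Xs l x))
      = fderiv ℝ f x (fderiv ℝ (Xs l) x (X x) - fderiv ℝ X x (Xs l x)) := by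
    rw [map_sub]
  have hend : fderiv ℝ f x (fderiv ℝ (Xs l) x (X x)) = fderiv ℝ f x (fderiv ℝ X x (Xs l x)) := by
    have := congrArg (fderiv ℝ f x) hb
    rw [map_sub, map_zero] at this
    linarith
  rw [hend]
  linarith [hX0]
end

section
/- Define the bracket {F, G} := (L_{X_1}F)(L_{X_2}G) - (L_{X_2}F)(L_{X_1}G) on smooth functions, where X_1, X_2 are smooth vector fields on U satisfying [X_1, X_2] = F_1 X_1 + F_2 X_2 for some smooth F_1, F_2. Then {·,·} is a Poisson bracket: it is R-bilinear, antisymmetric, satisfies the Leibniz rule {F, GH} = {F,G}H + G{F,H}, and satisfies the Jacobi identity. -/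
open VectorField

/-- The bracket `{F, G} = (L_{X₁}F)(L_{X₂}G) - (L_{X₂}F)(L_{X₁}G)` induced by two
vector fields `X₁, X₂`. -/
noncomputable def poissonBracket {E : Type*} [NormedAddCommGroup E] [NormedSpace ℝ E]
    (X₁ X₂ : E → E) (F G : E → ℝ) (x : E) : ℝ :=
  fderiv ℝ F x (X₁ x) * fderiv ℝ G x (X₂ x) - fderiv ℝ F x (X₂ x) * fderiv ℝ G x (X₁ x)

/-- Derivative of the Lie derivative `y ↦ (L_X P)(y)` in a direction `v`. -/
theorem fderiv_lieDeriv_aux {E : Type*} [NormedAddCommGroup E] [NormedSpace ℝ E]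
    {U : Set E} (hU : IsOpen U) {X : E → E} {P : E → ℝ}
    (hX : ContDiffOn ℝ (⊤ : ℕ∞) X U) (hP : ContDiffOn ℝ (⊤ : ℕ∞) P U) {x : E} (hx : x ∈ U) (v : E) :
    fderiv ℝ (fun y => fderiv ℝ P y (X y)) x v
      = fderiv ℝ (fderiv ℝ P) x v (X x) + fderiv ℝ P x (fderiv ℝ X x v) := by
  have hfd : ContDiffOn ℝ 1 (fderiv ℝ P) U :=
    (hP.of_le (WithTop.coe_le_coe.mpr (le_top : (2 : ℕ∞) ≤ ⊤)) : ContDiffOn ℝ 2 P U).fderiv_of_isOpen hU (by norm_num)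
  have hc : DifferentiableAt ℝ (fderiv ℝ P) x :=
    (hfd.contDiffAt (hU.mem_nhds hx)).differentiableAt one_ne_zero
  have hu : DifferentiableAt ℝ X x :=
    (hX.contDiffAt (hU.mem_nhds hx)).differentiableAt (by simp)
  rw [fderiv_clm_apply hc hu]
  simp [ContinuousLinearMap.add_apply]
  ring

/-- The `L`-derivatives are differentiable. -/
theorem diffAt_lieDeriv_aux {E : Type*} [NormedAddCommGroup E] [NormedSpace ℝ E]
    {U : Set E} (hU : IsOpen U) {X : E → E} {P : E → ℝ}
    (hX : ContDiffOn ℝ (⊤ : ℕ∞) X U) (hP : ContDiffOn ℝ (⊤ : ℕ∞) P U) {x : E} (hx : x ∈ U) :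
    DifferentiableAt ℝ (fun y => fderiv ℝ P y (X y)) x := by
  have hfd : ContDiffOn ℝ 1 (fderiv ℝ P) U :=
    (hP.of_le (WithTop.coe_le_coe.mpr (le_top : (2 : ℕ∞) ≤ ⊤)) : ContDiffOn ℝ 2 P U).fderiv_of_isOpen hU (by norm_num)
  exact ((hfd.clm_apply (hX.of_le (by simp))).contDiffAt (hU.mem_nhds hx)).differentiableAt one_ne_zero

/-- The bracket `{F, G} = (L_{X₁}F)(L_{X₂}G) - (L_{X₂}F)(L_{X₁}G)` is a Poisson
bracket on an open set `U` on which `[X₁, X₂] = F₁ X₁ + F₂ X₂`: it is ℝ-bilinear,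
antisymmetric, satisfies the Leibniz rule, and satisfies the Jacobi identity. -/
theorem poissonBracket_is_poisson
    {E : Type*} [NormedAddCommGroup E] [NormedSpace ℝ E]
    {U : Set E} (hU : IsOpen U)
    (X₁ X₂ : E → E) (F₁ F₂ : E → ℝ)
    (hX₁ : ContDiffOn ℝ (⊤ : ℕ∞) X₁ U) (hX₂ : ContDiffOn ℝ (⊤ : ℕ∞) X₂ U)
    (hbr : ∀ x ∈ U, lieBracket ℝ X₁ X₂ x = F₁ x • X₁ x + F₂ x • X₂ x) :
    ∀ F G H : E → ℝ, ContDiffOn ℝ (⊤ : ℕ∞) F U → ContDiffOn ℝ (⊤ : ℕ∞) G U → ContDiffOn ℝ (⊤ : ℕ∞) H U →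
      ∀ x ∈ U,
      (∀ c : ℝ, poissonBracket X₁ X₂ (fun q => c * F q + G q) H x
          = c * poissonBracket X₁ X₂ F H x + poissonBracket X₁ X₂ G H x) ∧
      poissonBracket X₁ X₂ F G x = - poissonBracket X₁ X₂ G F x ∧
      poissonBracket X₁ X₂ F (fun q => G q * H q) x
        = poissonBracket X₁ X₂ F G x * H x + G x * poissonBracket X₁ X₂ F H x ∧
      poissonBracket X₁ X₂ F (poissonBracket X₁ X₂ G H) x
        + poissonBracket X₁ X₂ G (poissonBracket X₁ X₂ H F) x
        + poissonBracket X₁ X₂ H (poissonBracket X₁ X₂ F G) x = 0 := by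
  intro F G H hF hG hH x hx
  have hdF : DifferentiableAt ℝ F x := (hF.contDiffAt (hU.mem_nhds hx)).differentiableAt (by simp)
  have hdG : DifferentiableAt ℝ G x := (hG.contDiffAt (hU.mem_nhds hx)).differentiableAt (by simp)
  have hdH : DifferentiableAt ℝ H x := (hH.contDiffAt (hU.mem_nhds hx)).differentiableAt (by simp)
  refine ⟨?_, ?_, ?_, ?_⟩
  · intro c
    have h1 : fderiv ℝ (fun q => c * F q + G q) x = c • fderiv ℝ F x + fderiv ℝ G x := by
      rw [fderiv_fun_add ((hdF.const_mul c)) hdG, fderiv_const_mul hdF]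
    simp only [poissonBracket, h1, ContinuousLinearMap.add_apply, ContinuousLinearMap.smul_apply,
      smul_eq_mul]
    ring
  · simp only [poissonBracket]; ring
  · have h1 : fderiv ℝ (fun q => G q * H q) x = G x • fderiv ℝ H x + H x • fderiv ℝ G x :=
      fderiv_mul hdG hdH
    simp only [poissonBracket, h1, ContinuousLinearMap.add_apply, ContinuousLinearMap.smul_apply,
      smul_eq_mul]
    ring
  · -- Jacobi identity
    -- derivative of a bracket
    have hbd : ∀ P Q : E → ℝ, ContDiffOn ℝ (⊤ : ℕ∞) P U → ContDiffOn ℝ (⊤ : ℕ∞) Q U → ∀ v : E,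
        fderiv ℝ (poissonBracket X₁ X₂ P Q) x v =
          (fderiv ℝ (fderiv ℝ P) x v (X₁ x) + fderiv ℝ P x (fderiv ℝ X₁ x v))
              * fderiv ℝ Q x (X₂ x)
          + fderiv ℝ P x (X₁ x)
              * (fderiv ℝ (fderiv ℝ Q) x v (X₂ x) + fderiv ℝ Q x (fderiv ℝ X₂ x v))
          - ((fderiv ℝ (fderiv ℝ P) x v (X₂ x) + fderiv ℝ P x (fderiv ℝ X₂ x v))
              * fderiv ℝ Q x (X₁ x)
          + fderiv ℝ P x (X₂ x)
              * (fderiv ℝ (fderiv ℝ Q) x v (X₁ x) + fderiv ℝ Q x (fderiv ℝ X₁ x v))) := by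
      intro P Q hP hQ v
      have d1P := diffAt_lieDeriv_aux hU hX₁ hP hx
      have d2P := diffAt_lieDeriv_aux hU hX₂ hP hx
      have d1Q := diffAt_lieDeriv_aux hU hX₁ hQ hx
      have d2Q := diffAt_lieDeriv_aux hU hX₂ hQ hx
      have : poissonBracket X₁ X₂ P Q = fun y =>
          (fun y => fderiv ℝ P y (X₁ y)) y * (fun y => fderiv ℝ Q y (X₂ y)) y
          - (fun y => fderiv ℝ P y (X₂ y)) y * (fun y => fderiv ℝ Q y (X₁ y)) y := rfl
      rw [this, fderiv_fun_sub (d1P.fun_mul d2Q) (d2P.fun_mul d1Q), fderiv_fun_mul d1P d2Q, fderiv_fun_mul d2P d1Q]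
      simp only [ContinuousLinearMap.sub_apply, ContinuousLinearMap.add_apply,
        ContinuousLinearMap.smul_apply, smul_eq_mul,
        fderiv_lieDeriv_aux hU hX₁ hP hx, fderiv_lieDeriv_aux hU hX₂ hP hx,
        fderiv_lieDeriv_aux hU hX₁ hQ hx, fderiv_lieDeriv_aux hU hX₂ hQ hx]
      ring
    -- the commutator relation applied to scalar functions
    have hlie : fderiv ℝ X₂ x (X₁ x)
        = fderiv ℝ X₁ x (X₂ x) + (F₁ x • X₁ x + F₂ x • X₂ x) := by
      have h : fderiv ℝ X₂ x (X₁ x) - fderiv ℝ X₁ x (X₂ x)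
          = F₁ x • X₁ x + F₂ x • X₂ x := hbr x hx
      rw [← h]; abel
    have hq : ∀ P : E → ℝ, fderiv ℝ P x (fderiv ℝ X₂ x (X₁ x))
        = fderiv ℝ P x (fderiv ℝ X₁ x (X₂ x))
          + F₁ x * fderiv ℝ P x (X₁ x) + F₂ x * fderiv ℝ P x (X₂ x) := by
      intro P
      rw [hlie, map_add, map_add, map_smul, map_smul]
      simp [smul_eq_mul]; ring
    -- symmetry of second derivatives
    have hsF := ((hF.contDiffAt (hU.mem_nhds hx)).isSymmSndFDerivAt (by rw [minSmoothness_of_isRCLikeNormedField]; exact WithTop.coe_le_coe.mpr (le_top : (2 : ℕ∞) ≤ ⊤))) (X₂ x) (X₁ x)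
    have hsG := ((hG.contDiffAt (hU.mem_nhds hx)).isSymmSndFDerivAt (by rw [minSmoothness_of_isRCLikeNormedField]; exact WithTop.coe_le_coe.mpr (le_top : (2 : ℕ∞) ≤ ⊤))) (X₂ x) (X₁ x)
    have hsH := ((hH.contDiffAt (hU.mem_nhds hx)).isSymmSndFDerivAt (by rw [minSmoothness_of_isRCLikeNormedField]; exact WithTop.coe_le_coe.mpr (le_top : (2 : ℕ∞) ≤ ⊤))) (X₂ x) (X₁ x)
    have e1 : poissonBracket X₁ X₂ F (poissonBracket X₁ X₂ G H) x =
        fderiv ℝ F x (X₁ x) * fderiv ℝ (poissonBracket X₁ X₂ G H) x (X₂ x)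
        - fderiv ℝ F x (X₂ x) * fderiv ℝ (poissonBracket X₁ X₂ G H) x (X₁ x) := rfl
    have e2 : poissonBracket X₁ X₂ G (poissonBracket X₁ X₂ H F) x =
        fderiv ℝ G x (X₁ x) * fderiv ℝ (poissonBracket X₁ X₂ H F) x (X₂ x)
        - fderiv ℝ G x (X₂ x) * fderiv ℝ (poissonBracket X₁ X₂ H F) x (X₁ x) := rfl
    have e3 : poissonBracket X₁ X₂ H (poissonBracket X₁ X₂ F G) x =
        fderiv ℝ H x (X₁ x) * fderiv ℝ (poissonBracket X₁ X₂ F G) x (X₂ x)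
        - fderiv ℝ H x (X₂ x) * fderiv ℝ (poissonBracket X₁ X₂ F G) x (X₁ x) := rfl
    rw [e1, e2, e3, hbd G H hG hH, hbd G H hG hH, hbd H F hH hF, hbd H F hH hF,
      hbd F G hF hG, hbd F G hF hG, hq F, hq G, hq H, hsF, hsG, hsH]
    ring
end

section
/- Let X, X_1, X_2 be smooth vector fields on U with [X, X_1] = [X, X_2] = 0, X_1, X_2 pointwise linearly independent, and [X_1, X_2] = F_1 X_1 + F_2 X_2. Suppose there exists a smooth function H with X = (L_{X_2}H)·X_1 - (L_{X_1}H)·X_2. Then H is a first integral of X (L_X H = 0), and every function C with L_{X_1}C = L_{X_2}C = 0 is also a first integral of X. -/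
open VectorField

/-- Hamilton–Poisson realization: if `X₁, X₂` are pointwise linearly independent
infinitesimal symmetries of `X` with `[X₁, X₂] = F₁ X₁ + F₂ X₂`, and
`X = (L_{X₂}H)·X₁ - (L_{X₁}H)·X₂` for a smooth function `H`, then `H` is a first
integral of `X` and every function `C` with `L_{X₁}C = L_{X₂}C = 0` on `U` is a
first integral of `X`. -/
theorem hamiltonian_realization_first_integrals
    {E : Type*} [NormedAddCommGroup E] [NormedSpace ℝ E]
    {U : Set E} (hU : IsOpen U)
    (X X₁ X₂ : E → E) (F₁ F₂ H : E → ℝ)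
    (hX : ContDiffOn ℝ (⊤ : ℕ∞) X U) (hX₁ : ContDiffOn ℝ (⊤ : ℕ∞) X₁ U) (hX₂ : ContDiffOn ℝ (⊤ : ℕ∞) X₂ U)
    (hH : ContDiffOn ℝ (⊤ : ℕ∞) H U)
    (h₁ : ∀ x ∈ U, lieBracket ℝ X X₁ x = 0)
    (h₂ : ∀ x ∈ U, lieBracket ℝ X X₂ x = 0)
    (hindep : ∀ x ∈ U, LinearIndependent ℝ ![X₁ x, X₂ x])
    (hbr : ∀ x ∈ U, lieBracket ℝ X₁ X₂ x = F₁ x • X₁ x + F₂ x • X₂ x)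
    (hham : ∀ x ∈ U, X x = fderiv ℝ H x (X₂ x) • X₁ x - fderiv ℝ H x (X₁ x) • X₂ x) :
    (∀ x ∈ U, fderiv ℝ H x (X x) = 0) ∧
    (∀ C : E → ℝ, ContDiffOn ℝ (⊤ : ℕ∞) C U →
      (∀ x ∈ U, fderiv ℝ C x (X₁ x) = 0 ∧ fderiv ℝ C x (X₂ x) = 0) →
      ∀ x ∈ U, fderiv ℝ C x (X x) = 0) := by
  constructor
  · intro x hx
    rw [hham x hx, map_sub, map_smul, map_smul, smul_eq_mul, smul_eq_mul]
    ring
  · intro C hC hker x hx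
    rw [hham x hx, map_sub, map_smul, map_smul, (hker x hx).1, (hker x hx).2,
      smul_zero, smul_zero, sub_zero]
end
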